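/- Let U ⊆ ℝ^(n+2) be open, (ξ, N) a null frame on U, and Z : U → ℝ^(n+2) a differentiable closed conformal field with factor φ : U → ℝ; let Z* : U → ℝ^(n+2), Z*(p) = P_p(Z p), be its (differentiable) screen part. Then for every p ∈ U and every screen vector v at p: (a) φ(p) • v = P_p(fderiv ℝ Z* p v) - η(Z p, N p) • A*_ξ(p)(v) - η(Z p, ξ p) • A_N(p)(v); (b) η(A_N(p)(v), Z*(p)) + D_v(q ↦ η(Z q, N q))(p) - η(Z p, N p) * τ_p(v) = 0; (c) η(A*_ξ(p)(v), Z*(p)) + D_v(q ↦ η(Z q, ξ q))(p) + η(Z p, ξ p) * τ_p(v) = 0. (Flat-Minkowski-ambient form of the paper's lemma giving the screen, radical and transversal components of the closed conformal equation along a null hypersurface.) -/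

import Mathlib

open scoped BigOperators

noncomputable section

/-- Euclidean space `ℝ^m`. -/
abbrev E (m : ℕ) : Type := EuclideanSpace ℝ (Fin m)

/-- The Minkowski bilinear form `η(x,y) = -(x 0)(y 0) + ∑_{i≥1} (x i)(y i)` on `ℝ^(n+2)`. -/
def eta {n : ℕ} (x y : E (n + 2)) : ℝ :=
  (∑ i, x i * y i) - 2 * (x 0 * y 0)

/-- Screen projection `P_p(w) = w - η(w,N)ξ - η(w,ξ)N` determined by the null frame at a point. -/
def sproj {n : ℕ} (xi N w : E (n + 2)) : E (n + 2) :=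
  w - eta w N • xi - eta w xi • N

/-- Screen shape operator `A*_ξ(p)(v) = -P_p(D_v ξ (p))`. -/
def Astar {n : ℕ} (xi N : E (n + 2) → E (n + 2)) (p v : E (n + 2)) : E (n + 2) :=
  -sproj (xi p) (N p) (fderiv ℝ xi p v)

/-- Shape operator `A_N(p)(v) = -P_p(D_v N (p))`. -/
def AN {n : ℕ} (xi N : E (n + 2) → E (n + 2)) (p v : E (n + 2)) : E (n + 2) :=
  -sproj (xi p) (N p) (fderiv ℝ N p v)

/-- Transversal one-form `τ_p(v) = η(D_v N(p), ξ p)`. -/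
def tau {n : ℕ} (xi N : E (n + 2) → E (n + 2)) (p v : E (n + 2)) : ℝ :=
  eta (fderiv ℝ N p v) (xi p)

/-- Screen part `Z*(p) = P_p(Z p)` of a vector field. -/
def Zstar {n : ℕ} (xi N Z : E (n + 2) → E (n + 2)) (p : E (n + 2)) : E (n + 2) :=
  sproj (xi p) (N p) (Z p)

/-- `A_{Z⊥}(p)(v) = η(Z p, N p) • A*_ξ(p)(v) + η(Z p, ξ p) • A_N(p)(v)`. -/
def AZperp {n : ℕ} (xi N Z : E (n + 2) → E (n + 2)) (p v : E (n + 2)) : E (n + 2) :=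
  eta (Z p) (N p) • Astar xi N p v + eta (Z p) (xi p) • AN xi N p v

/-!
Differentiating `Z* = Z - η(Z,N) ξ - η(Z,ξ) N` and projecting to the screen, which kills `ξ` and
`N` and fixes screen vectors, gives (a), since `D_v Z = φ v`. For (b) and (c), the same
`D_v Z = φ v` and `v ⊥ ξ, N` give `D_v η(Z,N) = η(Z, D_v N)` and `D_v η(Z,ξ) = η(Z, D_v ξ)`, while
`η(P w, P z) = η(w,z) - η(w,N) η(z,ξ) - η(w,ξ) η(z,N)` evaluates `η(A_N v, Z*)` and
`η(A*_ξ v, Z*)`; differentiating the frame relations gives `η(D_v N, N) = η(D_v ξ, ξ) = 0` and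
`η(D_v ξ, N) = -τ(v)`.
-/

section Algebra

variable {n : ℕ}

theorem eta_comm (x y : E (n + 2)) : eta x y = eta y x := by
  simp only [eta, mul_comm (x _) (y _)]

theorem eta_add_left (x x' y : E (n + 2)) : eta (x + x') y = eta x y + eta x' y := by
  simp only [eta, PiLp.add_apply, add_mul, Finset.sum_add_distrib]
  ring

theorem eta_smul_left (c : ℝ) (x y : E (n + 2)) : eta (c • x) y = c * eta x y := by
  simp only [eta, PiLp.smul_apply, smul_eq_mul, mul_assoc, ← Finset.mul_sum]
  ring

theorem eta_sub_left (x x' y : E (n + 2)) : eta (x - x') y = eta x y - eta x' y := by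
  rw [sub_eq_add_neg, ← neg_one_smul ℝ x', eta_add_left, eta_smul_left]
  ring

theorem eta_neg_left (x y : E (n + 2)) : eta (-x) y = -eta x y := by
  rw [← neg_one_smul ℝ x, eta_smul_left, neg_one_mul]

theorem isBilinearMap_eta : IsBilinearMap ℝ (eta (n := n)) where
  add_left := eta_add_left
  smul_left := eta_smul_left
  add_right x y y' := by rw [eta_comm, eta_add_left, eta_comm y, eta_comm y']
  smul_right c x y := by rw [eta_comm, eta_smul_left, eta_comm, smul_eq_mul]

/-- The value of a null frame at a point. -/
structure IsNullPair (xi N : E (n + 2)) : Prop where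
  xi_xi : eta xi xi = 0
  N_N : eta N N = 0
  xi_N : eta xi N = 1

theorem sproj_sub (xi N w w' : E (n + 2)) :
    sproj xi N (w - w') = sproj xi N w - sproj xi N w' := by
  simp only [sproj, eta_sub_left, sub_smul]
  abel

theorem sproj_smul (xi N : E (n + 2)) (c : ℝ) (w : E (n + 2)) :
    sproj xi N (c • w) = c • sproj xi N w := by
  simp only [sproj, eta_smul_left, smul_sub, mul_smul]

theorem sproj_add (xi N w w' : E (n + 2)) :
    sproj xi N (w + w') = sproj xi N w + sproj xi N w' := by
  simp only [sproj, eta_add_left, add_smul]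
  abel

variable {xi N : E (n + 2)}

theorem sproj_of_eta_eq_zero {w : E (n + 2)} (hxi : eta w xi = 0) (hN : eta w N = 0) :
    sproj xi N w = w := by
  simp [sproj, hxi, hN]

theorem IsNullPair.sproj_xi (h : IsNullPair xi N) : sproj xi N xi = 0 := by
  simp [sproj, h.xi_xi, h.xi_N]

theorem IsNullPair.sproj_N (h : IsNullPair xi N) : sproj xi N N = 0 := by
  simp [sproj, h.N_N, eta_comm N xi, h.xi_N]

theorem IsNullPair.eta_sproj_xi (h : IsNullPair xi N) (w : E (n + 2)) :
    eta (sproj xi N w) xi = 0 := by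
  simp [sproj, eta_sub_left, eta_smul_left, h.xi_xi, eta_comm N xi, h.xi_N]

theorem IsNullPair.eta_sproj_N (h : IsNullPair xi N) (w : E (n + 2)) :
    eta (sproj xi N w) N = 0 := by
  simp [sproj, eta_sub_left, eta_smul_left, h.N_N, h.xi_N]

theorem IsNullPair.eta_sproj_sproj (h : IsNullPair xi N) (w z : E (n + 2)) :
    eta (sproj xi N w) (sproj xi N z)
      = eta w z - eta w N * eta z xi - eta w xi * eta z N := by
  rw [eta_comm, sproj, eta_sub_left, eta_sub_left, eta_smul_left, eta_smul_left,
    eta_comm xi, eta_comm N, h.eta_sproj_xi, h.eta_sproj_N, eta_comm z, sproj, eta_sub_left,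
    eta_sub_left, eta_smul_left, eta_smul_left, eta_comm xi z, eta_comm N z]
  ring

end Algebra

section Calculus

variable {n : ℕ} {F : Type*} [NormedAddCommGroup F] [NormedSpace ℝ F] {f g : F → E (n + 2)} {p : F}

theorem hasFDerivAt_eta {f' g' : F →L[ℝ] E (n + 2)} (hf : HasFDerivAt f f' p)
    (hg : HasFDerivAt g g' p) :
    HasFDerivAt (fun q => eta (f q) (g q))
      (isBilinearMap_eta.toContinuousBilinearMap.precompR F (f p) g'
        + isBilinearMap_eta.toContinuousBilinearMap.precompL F f' (g p)) p :=
  isBilinearMap_eta.toContinuousBilinearMap.hasFDerivAt_of_bilinear hf hg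

theorem DifferentiableAt.eta (hf : DifferentiableAt ℝ f p) (hg : DifferentiableAt ℝ g p) :
    DifferentiableAt ℝ (fun q => eta (f q) (g q)) p :=
  (hasFDerivAt_eta hf.hasFDerivAt hg.hasFDerivAt).differentiableAt

theorem fderiv_eta_apply (hf : DifferentiableAt ℝ f p) (hg : DifferentiableAt ℝ g p) (v : F) :
    fderiv ℝ (fun q => eta (f q) (g q)) p v
      = eta (fderiv ℝ f p v) (g p) + eta (f p) (fderiv ℝ g p v) := by
  rw [(hasFDerivAt_eta hf.hasFDerivAt hg.hasFDerivAt).fderiv]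
  simp [add_comm]

theorem fderiv_eta_apply_add_eq_zero_of_eqOn_const {U : Set F} {c : ℝ} (hU : IsOpen U)
    (hp : p ∈ U) (hf : DifferentiableAt ℝ f p) (hg : DifferentiableAt ℝ g p)
    (h : ∀ q ∈ U, eta (f q) (g q) = c) (v : F) :
    eta (fderiv ℝ f p v) (g p) + eta (f p) (fderiv ℝ g p v) = 0 := by
  have hconst : fderiv ℝ (fun q => eta (f q) (g q)) p = 0 :=
    (Filter.eventuallyEq_of_mem (hU.mem_nhds hp) h).fderiv_eq.trans (fderiv_const_apply c)
  rw [← fderiv_eta_apply hf hg, hconst, zero_apply]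

theorem eta_fderiv_self_eq_zero_of_eqOn_zero {U : Set F} (hU : IsOpen U) (hp : p ∈ U)
    (hf : DifferentiableAt ℝ f p) (h : ∀ q ∈ U, eta (f q) (f q) = 0) (v : F) :
    eta (fderiv ℝ f p v) (f p) = 0 := by
  have := fderiv_eta_apply_add_eq_zero_of_eqOn_const hU hp hf hf h v
  rw [eta_comm (f p)] at this
  linarith

theorem eta_fderiv_eq_neg_of_eqOn_const {U : Set F} {c : ℝ} (hU : IsOpen U) (hp : p ∈ U)
    (hf : DifferentiableAt ℝ f p) (hg : DifferentiableAt ℝ g p)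
    (h : ∀ q ∈ U, eta (f q) (g q) = c) (v : F) :
    eta (fderiv ℝ f p v) (g p) = -eta (fderiv ℝ g p v) (f p) := by
  have := fderiv_eta_apply_add_eq_zero_of_eqOn_const hU hp hf hg h v
  rw [eta_comm (f p)] at this
  linarith

theorem fderiv_sproj_apply {xi N Z : F → E (n + 2)} (hxi : DifferentiableAt ℝ xi p)
    (hN : DifferentiableAt ℝ N p) (hZ : DifferentiableAt ℝ Z p) (v : F) :
    fderiv ℝ (fun q => sproj (xi q) (N q) (Z q)) p v
      = fderiv ℝ Z p v
        - (fderiv ℝ (fun q => eta (Z q) (N q)) p v • xi p + eta (Z p) (N p) • fderiv ℝ xi p v)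
        - (fderiv ℝ (fun q => eta (Z q) (xi q)) p v • N p + eta (Z p) (xi p) • fderiv ℝ N p v) := by
  have hZN := (hZ.eta hN).hasFDerivAt.smul hxi.hasFDerivAt
  have hZxi := (hZ.eta hxi).hasFDerivAt.smul hN.hasFDerivAt
  have hsproj : HasFDerivAt (fun q => sproj (xi q) (N q) (Z q)) _ p :=
    (hZ.hasFDerivAt.sub hZN).sub hZxi
  rw [hsproj.fderiv]
  simp [add_comm]

theorem sproj_fderiv_sproj {xi N Z : F → E (n + 2)} (hxi : DifferentiableAt ℝ xi p)
    (hN : DifferentiableAt ℝ N p) (hZ : DifferentiableAt ℝ Z p)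
    (hframe : IsNullPair (xi p) (N p)) (v : F) :
    sproj (xi p) (N p) (fderiv ℝ (fun q => sproj (xi q) (N q) (Z q)) p v)
      = sproj (xi p) (N p) (fderiv ℝ Z p v)
        - eta (Z p) (N p) • sproj (xi p) (N p) (fderiv ℝ xi p v)
        - eta (Z p) (xi p) • sproj (xi p) (N p) (fderiv ℝ N p v) := by
  rw [fderiv_sproj_apply hxi hN hZ]
  simp only [sproj_sub, sproj_add, sproj_smul, hframe.sproj_xi, hframe.sproj_N, smul_zero, zero_add]

end Calculus

theorem fderiv_eta_apply_of_fderiv_eq_smul_id {n : ℕ} {Z g : E (n + 2) → E (n + 2)}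
    {p v : E (n + 2)} {c : ℝ} (hZ : DifferentiableAt ℝ Z p) (hg : DifferentiableAt ℝ g p)
    (hcc : fderiv ℝ Z p = c • ContinuousLinearMap.id ℝ (E (n + 2))) (hv : eta v (g p) = 0) :
    fderiv ℝ (fun q => eta (Z q) (g q)) p v = eta (Z p) (fderiv ℝ g p v) := by
  rw [fderiv_eta_apply hZ hg, hcc, smul_apply, ContinuousLinearMap.id_apply,
    eta_smul_left, hv, mul_zero, zero_add]

/-- The screen, radical and transversal components of the closed conformal
equation along a null hypersurface (flat Minkowski ambient form). -/
theorem cc_equation_components {n : ℕ}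
    (U : Set (E (n + 2))) (hU : IsOpen U)
    (ξ N Z : E (n + 2) → E (n + 2)) (φ : E (n + 2) → ℝ)
    (hξd : ∀ p ∈ U, DifferentiableAt ℝ ξ p)
    (hNd : ∀ p ∈ U, DifferentiableAt ℝ N p)
    (hZd : ∀ p ∈ U, DifferentiableAt ℝ Z p)
    (hξξ : ∀ p ∈ U, eta (ξ p) (ξ p) = 0)
    (hNN : ∀ p ∈ U, eta (N p) (N p) = 0)
    (hξN : ∀ p ∈ U, eta (ξ p) (N p) = 1)
    (hCC : ∀ p ∈ U, fderiv ℝ Z p = φ p • ContinuousLinearMap.id ℝ (E (n + 2))) :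
    ∀ p ∈ U, ∀ v : E (n + 2), eta v (ξ p) = 0 → eta v (N p) = 0 →
      (φ p • v = sproj (ξ p) (N p) (fderiv ℝ (Zstar ξ N Z) p v)
          - eta (Z p) (N p) • Astar ξ N p v - eta (Z p) (ξ p) • AN ξ N p v) ∧
      (eta (AN ξ N p v) (Zstar ξ N Z p)
          + fderiv ℝ (fun q => eta (Z q) (N q)) p v
          - eta (Z p) (N p) * tau ξ N p v = 0) ∧
      (eta (Astar ξ N p v) (Zstar ξ N Z p)
          + fderiv ℝ (fun q => eta (Z q) (ξ q)) p v
          + eta (Z p) (ξ p) * tau ξ N p v = 0) := by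
  intro p hp v hvξ hvN
  have hframe : IsNullPair (ξ p) (N p) := ⟨hξξ p hp, hNN p hp, hξN p hp⟩
  have hZv : fderiv ℝ Z p v = φ p • v := by rw [hCC p hp]; rfl
  have hDξ_ξ := eta_fderiv_self_eq_zero_of_eqOn_zero hU hp (hξd p hp) hξξ v
  have hDN_N := eta_fderiv_self_eq_zero_of_eqOn_zero hU hp (hNd p hp) hNN v
  have hDξ_N := eta_fderiv_eq_neg_of_eqOn_const hU hp (hξd p hp) (hNd p hp) hξN v
  refine ⟨?_, ?_, ?_⟩
  · unfold Zstar
    rw [sproj_fderiv_sproj (hξd p hp) (hNd p hp) (hZd p hp) hframe, hZv, sproj_smul,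
      sproj_of_eta_eq_zero hvξ hvN]
    simp only [Astar, AN, smul_neg]
    abel
  · rw [fderiv_eta_apply_of_fderiv_eq_smul_id (hZd p hp) (hNd p hp) (hCC p hp) hvN]
    simp only [AN, Zstar, tau, eta_neg_left, hframe.eta_sproj_sproj, hDN_N,
      eta_comm (Z p) (fderiv ℝ N p v)]
    ring
  · rw [fderiv_eta_apply_of_fderiv_eq_smul_id (hZd p hp) (hξd p hp) (hCC p hp) hvξ]
    simp only [Astar, Zstar, tau, eta_neg_left, hframe.eta_sproj_sproj, hDξ_ξ, hDξ_N,
      eta_comm (Z p) (fderiv ℝ ξ p v)]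
    ring
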